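/- arXiv:1707.03814 — 2 statements merged into one kernel-verified Lean document; each statement's English description precedes it below -/
import Mathlib

section
/- A subset S ⊆ 𝕊, equipped with the subspace topology induced by the localic topology, is a sober topological space (i.e., it is T0 and every nonempty irreducible closed subset has a generic point) if and only if S is closed in the pcfb-topology on 𝕊. -/
open Topology

/-- A supernatural number: a function from the set of primes to `ℕ∞ = ℕ ∪ {∞}`,
thought of as the formal product `∏ p ^ (s p)`. -/
def Supernatural : Type := Nat.Primes → ℕ∞

/-- Divisibility of supernatural numbers: `s ∣ t` iff `s p ≤ t p` for every prime `p`. -/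
instance : Dvd Supernatural := ⟨fun s t => ∀ p, s p ≤ t p⟩

/-- The supernatural number associated to a positive natural number,
given by its prime factorization. -/
def natToSuper (n : ℕ+) : Supernatural := fun p => ((n : ℕ).factorization p : ℕ∞)

/-- The localic topology on `𝕊`, generated by the open sets `(n) = {s : n ∣ s}`
for `n` a positive natural number. -/
def localicTopology : TopologicalSpace Supernatural :=
  .generateFrom {U | ∃ n : ℕ+, U = {s | natToSuper n ∣ s}}

attribute [instance] localicTopology

/-- The pcfb-topology on `𝕊`, generated by the sets `{x | n ∣ x ∧ x ∣ s}`
for `n` a positive natural number and `s` a supernatural number. -/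
def pcfbTopology : TopologicalSpace Supernatural :=
  .generateFrom {U | ∃ (n : ℕ+) (t : Supernatural), U = {x | natToSuper n ∣ x ∧ x ∣ t}}

/-!
Identify `𝕊` with the complete lattice `Nat.Primes → ℕ∞`, divisibility being `≤`. The closure of
`{t}` is then `Iic t`, and a set `D ⊆ 𝕊` is irreducible iff `sSup D ∈ closure D`: a basic
neighbourhood `(n)` of `sSup D` splits into the coprime prime-power neighbourhoods
`(p ^ k)`, each of which meets `D` by definition of the supremum, and irreducibility makes them
meet `D` simultaneously. So an irreducible closed `T ⊆ S` can only have `sSup T` as generic point,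
and `S` is sober iff every `x` lying in the closure of its divisors in `S` belongs to `S`. Unwinding
the basic pcfb-neighbourhoods `{y | n ∣ y ∧ y ∣ u}` of `x`, this is exactly pcfb-closedness.
-/

open TopologicalSpace Set

theorem Topology.IsInducing.isPreirreducible_image_iff {X Y : Type*} [TopologicalSpace X]
    [TopologicalSpace Y] {f : X → Y} (hf : IsInducing f) {s : Set X} :
    IsPreirreducible (f '' s) ↔ IsPreirreducible s := by
  refine ⟨fun h u v hu hv ⟨a, has, hau⟩ ⟨b, hbs, hbv⟩ => ?_,
    fun h => h.image f hf.continuous.continuousOn⟩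
  obtain ⟨u', hu', rfl⟩ := hf.isOpen_iff.1 hu
  obtain ⟨v', hv', rfl⟩ := hf.isOpen_iff.1 hv
  obtain ⟨_, ⟨c, hcs, rfl⟩, hcu, hcv⟩ :=
    h u' v' hu' hv' ⟨f a, mem_image_of_mem f has, hau⟩ ⟨f b, mem_image_of_mem f hbs, hbv⟩
  exact ⟨c, hcs, hcu, hcv⟩

theorem Topology.IsInducing.isIrreducible_image_iff {X Y : Type*} [TopologicalSpace X]
    [TopologicalSpace Y] {f : X → Y} (hf : IsInducing f) {s : Set X} :
    IsIrreducible (f '' s) ↔ IsIrreducible s :=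
  and_congr image_nonempty hf.isPreirreducible_image_iff

theorem ENat.exists_natCast_le_of_le_iSup {ι : Type*} [Nonempty ι] {f : ι → ℕ∞} {k : ℕ}
    (h : (k : ℕ∞) ≤ ⨆ i, f i) : ∃ i, (k : ℕ∞) ≤ f i := by
  cases k with
  | zero => exact ⟨Classical.arbitrary ι, by simp⟩
  | succ k =>
    push_cast at h
    obtain ⟨i, hk⟩ := lt_iSup_iff.1 ((ENat.add_one_le_iff (ENat.natCast_ne_top k)).1 h)
    exact ⟨i, by exact_mod_cast Order.add_one_le_of_lt hk⟩

namespace Supernatural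

noncomputable instance : CompleteLattice Supernatural :=
  inferInstanceAs (CompleteLattice (Nat.Primes → ℕ∞))

theorem dvd_def {s t : Supernatural} : s ∣ t ↔ ∀ p, s p ≤ t p := Iff.rfl

theorem dvd_iff_le {s t : Supernatural} : s ∣ t ↔ s ≤ t := Iff.rfl

theorem natToSuper_one_dvd (s : Supernatural) : natToSuper 1 ∣ s :=
  fun p => by simp [natToSuper]

theorem natToSuper_lcm_dvd_iff {m n : ℕ+} {s : Supernatural} :
    natToSuper (m.lcm n) ∣ s ↔ natToSuper m ∣ s ∧ natToSuper n ∣ s := by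
  simp only [dvd_def, natToSuper, PNat.lcm_coe,
    Nat.factorization_lcm m.ne_zero n.ne_zero, Finsupp.sup_apply, Nat.mono_cast.map_max,
    max_le_iff, forall_and]

theorem natToSuper_pow_dvd_iff (p : Nat.Primes) (k : ℕ) {s : Supernatural} :
    natToSuper ((p : ℕ+) ^ k) ∣ s ↔ (k : ℕ∞) ≤ s p := by
  have hfac (q : Nat.Primes) : natToSuper ((p : ℕ+) ^ k) q = if q = p then (k : ℕ∞) else 0 := by
    simp [natToSuper, PNat.pow_coe, Nat.Primes.coe_pnat_nat, p.prop.factorization_pow,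
      Finsupp.single_apply, Nat.Primes.coe_nat_inj, eq_comm]
  refine ⟨fun h => by simpa [hfac] using h p, fun h q => ?_⟩
  rw [hfac]
  split_ifs with hq
  · exact hq ▸ h
  · exact zero_le

theorem dvd_inf_iff {x u v : Supernatural} : x ∣ u ⊓ v ↔ x ∣ u ∧ x ∣ v :=
  le_inf_iff (α := Supernatural)

theorem isOpen_setOf_natToSuper_dvd (n : ℕ+) : IsOpen {s : Supernatural | natToSuper n ∣ s} :=
  GenerateOpen.basic _ ⟨n, rfl⟩

theorem isTopologicalBasis_setOf_natToSuper_dvd :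
    IsTopologicalBasis {U : Set Supernatural | ∃ n : ℕ+, U = {s | natToSuper n ∣ s}} where
  exists_subset_inter := by
    rintro _ ⟨m, rfl⟩ _ ⟨n, rfl⟩ x hx
    exact ⟨_, ⟨m.lcm n, rfl⟩, natToSuper_lcm_dvd_iff.2 hx, fun y => natToSuper_lcm_dvd_iff.1⟩
  sUnion_eq := sUnion_eq_univ_iff.2 fun x => ⟨_, ⟨1, rfl⟩, natToSuper_one_dvd x⟩
  eq_generateFrom := rfl

theorem mem_closure_iff_forall_natToSuper_dvd {A : Set Supernatural} {x : Supernatural} :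
    x ∈ closure A ↔ ∀ n : ℕ+, natToSuper n ∣ x → ∃ y ∈ A, natToSuper n ∣ y := by
  simp [isTopologicalBasis_setOf_natToSuper_dvd.mem_closure_iff, Set.Nonempty, and_comm]

theorem closure_singleton_eq_Iic (t : Supernatural) : closure {t} = Iic t := by
  ext x
  simp only [mem_closure_iff_forall_natToSuper_dvd, mem_singleton_iff, exists_eq_left, mem_Iic]
  refine ⟨fun h p => ENat.forall_natCast_le_iff_le.1 fun k hk => ?_,
    fun hxt n hn => le_trans (α := Supernatural) hn hxt⟩
  exact (natToSuper_pow_dvd_iff p k).1 (h _ ((natToSuper_pow_dvd_iff p k).2 hk))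

instance : ClosedIicTopology Supernatural :=
  ⟨fun t => closure_singleton_eq_Iic t ▸ isClosed_closure⟩

theorem specializes_iff_le {x y : Supernatural} : x ⤳ y ↔ y ≤ x := by
  rw [specializes_iff_mem_closure, closure_singleton_eq_Iic, mem_Iic]

instance : T0Space Supernatural :=
  ⟨fun _ _ h => le_antisymm (specializes_iff_le.1 h.specializes') (specializes_iff_le.1 h.specializes)⟩

theorem exists_mem_natToSuper_dvd_of_dvd_sSup {D : Set Supernatural} (hD : IsIrreducible D)
    (n : ℕ+) (hn : natToSuper n ∣ sSup D) : ∃ y ∈ D, natToSuper n ∣ y := by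
  suffices ∀ m : ℕ, ∀ n : ℕ+, (n : ℕ) = m → natToSuper n ∣ sSup D → ∃ y ∈ D, natToSuper n ∣ y from
    this n n rfl hn
  intro m
  induction m using Nat.recOnPrimeCoprime with
  | zero => exact fun n hn => absurd hn n.ne_zero
  | prime_pow p k hp =>
    rintro n hn hnD
    obtain ⟨q, rfl⟩ : ∃ q : Nat.Primes, (q : ℕ) = p := ⟨⟨p, hp⟩, rfl⟩
    obtain rfl : n = (q : ℕ+) ^ k := PNat.eq (by rw [hn, PNat.pow_coe, Nat.Primes.coe_pnat_nat])
    have := hD.nonempty.to_subtype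
    rw [natToSuper_pow_dvd_iff, show sSup D q = ⨆ y : D, y.1 q from sSup_apply] at hnD
    obtain ⟨⟨y, hyD⟩, hy⟩ := ENat.exists_natCast_le_of_le_iSup hnD
    exact ⟨y, hyD, (natToSuper_pow_dvd_iff q k).2 hy⟩
  | coprime a b _ _ hab iha ihb =>
    rintro n hn hnD
    obtain rfl : n = PNat.lcm (a.toPNat (by lia)) (b.toPNat (by lia)) :=
      PNat.eq (hn.trans hab.lcm_eq_mul.symm)
    simp only [natToSuper_lcm_dvd_iff] at hnD ⊢
    obtain ⟨y, hyD, hy⟩ := iha _ rfl hnD.1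
    obtain ⟨z, hzD, hz⟩ := ihb _ rfl hnD.2
    exact hD.2 _ _ (isOpen_setOf_natToSuper_dvd _) (isOpen_setOf_natToSuper_dvd _)
      ⟨y, hyD, hy⟩ ⟨z, hzD, hz⟩

theorem isIrreducible_iff_sSup_mem_closure {D : Set Supernatural} :
    IsIrreducible D ↔ sSup D ∈ closure D := by
  refine ⟨fun hD => mem_closure_iff_forall_natToSuper_dvd.2
    (exists_mem_natToSuper_dvd_of_dvd_sSup hD), fun h => ⟨closure_nonempty_iff.1 ⟨_, h⟩, ?_⟩⟩
  rintro U V hU hV ⟨y, hyD, hyU⟩ ⟨z, hzD, hzV⟩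
  obtain ⟨_, ⟨m, rfl⟩, hym, hmU⟩ :=
    isTopologicalBasis_setOf_natToSuper_dvd.exists_subset_of_mem_open hyU hU
  obtain ⟨_, ⟨n, rfl⟩, hzn, hnV⟩ :=
    isTopologicalBasis_setOf_natToSuper_dvd.exists_subset_of_mem_open hzV hV
  have hmn : natToSuper (m.lcm n) ∣ sSup D := natToSuper_lcm_dvd_iff.2
    ⟨le_trans (α := Supernatural) hym (le_sSup hyD),
      le_trans (α := Supernatural) hzn (le_sSup hzD)⟩
  obtain ⟨w, hwD, hw⟩ := mem_closure_iff_forall_natToSuper_dvd.1 h _ hmn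
  exact ⟨w, hwD, hmU (natToSuper_lcm_dvd_iff.1 hw).1, hnV (natToSuper_lcm_dvd_iff.1 hw).2⟩

theorem isTopologicalBasis_pcfb :
    @IsTopologicalBasis Supernatural pcfbTopology
      {U | ∃ (n : ℕ+) (t : Supernatural), U = {x | natToSuper n ∣ x ∧ x ∣ t}} := by
  let _ := pcfbTopology
  refine ⟨?_, sUnion_eq_univ_iff.2 fun x =>
    ⟨_, ⟨1, x, rfl⟩, natToSuper_one_dvd x, dvd_iff_le.2 le_rfl⟩, rfl⟩
  rintro _ ⟨m, u, rfl⟩ _ ⟨n, v, rfl⟩ x ⟨⟨hm, hu⟩, hn, hv⟩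
  refine ⟨_, ⟨m.lcm n, u ⊓ v, rfl⟩,
    ⟨natToSuper_lcm_dvd_iff.2 ⟨hm, hn⟩, dvd_inf_iff.2 ⟨hu, hv⟩⟩, ?_⟩
  rintro y ⟨hy, hyuv⟩
  exact ⟨⟨(natToSuper_lcm_dvd_iff.1 hy).1, (dvd_inf_iff.1 hyuv).1⟩,
    (natToSuper_lcm_dvd_iff.1 hy).2, (dvd_inf_iff.1 hyuv).2⟩

theorem isClosed_pcfb_iff {S : Set Supernatural} :
    IsClosed[pcfbTopology] S ↔ ∀ x, x ∈ closure (S ∩ Iic x) → x ∈ S := by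
  rw [← @isOpen_compl_iff _ _ pcfbTopology,
    @IsTopologicalBasis.isOpen_iff _ pcfbTopology _ _ isTopologicalBasis_pcfb]
  refine ⟨fun h x hx => by_contra fun hxS => ?_, fun h x hxS => ?_⟩
  · obtain ⟨_, ⟨n, u, rfl⟩, ⟨hn, hu⟩, hsub⟩ := h x hxS
    obtain ⟨y, ⟨hyS, hyx⟩, hny⟩ := mem_closure_iff_forall_natToSuper_dvd.1 hx n hn
    exact hsub ⟨hny, le_trans (α := Supernatural) hyx hu⟩ hyS
  · have hx := mt (h x) hxS
    simp only [mem_closure_iff_forall_natToSuper_dvd, not_forall, not_exists, not_and] at hx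
    obtain ⟨n, hn, hS⟩ := hx
    exact ⟨_, ⟨n, x, rfl⟩, ⟨hn, dvd_iff_le.2 le_rfl⟩, fun y ⟨hny, hyx⟩ hyS => hS y ⟨hyS, hyx⟩ hny⟩

theorem isGenericPoint_iff_isGreatest {S : Set Supernatural} {T : Set S} (hT : IsClosed T)
    {g : S} : IsGenericPoint g T ↔ IsGreatest (Subtype.val '' T) g := by
  refine ⟨fun hg => ⟨mem_image_of_mem _ hg.mem, ?_⟩, fun ⟨hgT, hub⟩ => ?_⟩
  · rintro _ ⟨y, hy, rfl⟩
    exact specializes_iff_le.1 ((subtype_specializes_iff _ _).1 (hg.specializes hy))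
  · obtain ⟨g', hg'T, hg'⟩ := hgT
    rw [Subtype.coe_inj] at hg'
    subst hg'
    refine isGenericPoint_iff_specializes.2 fun y =>
      ⟨fun hy => hy.mem_closed hT hg'T, fun hy => ?_⟩
    exact (subtype_specializes_iff _ _).2 (specializes_iff_le.2 (hub (mem_image_of_mem _ hy)))

theorem quasiSober_of_isClosed_pcfb {S : Set Supernatural} (hS : IsClosed[pcfbTopology] S) :
    QuasiSober S where
  sober {T} hT hTc := by
    set t := sSup (Subtype.val '' T)
    have htT : t ∈ closure (Subtype.val '' T) :=
      isIrreducible_iff_sSup_mem_closure.1 (hT.image _ continuous_subtype_val.continuousOn)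
    have hTt : Subtype.val '' T ⊆ S ∩ Iic t := by
      rintro _ ⟨y, hy, rfl⟩
      exact ⟨y.2, le_sSup (mem_image_of_mem Subtype.val hy)⟩
    have htS : t ∈ S := isClosed_pcfb_iff.1 hS t (closure_mono hTt htT)
    have htT' : (⟨t, htS⟩ : S) ∈ T := hTc.closure_eq ▸ closure_subtype.2 htT
    exact ⟨⟨t, htS⟩, (isGenericPoint_iff_isGreatest hTc).2
      ⟨mem_image_of_mem _ htT', fun _ hy => le_sSup hy⟩⟩

theorem isClosed_pcfb_of_quasiSober {S : Set Supernatural} [QuasiSober S] :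
    IsClosed[pcfbTopology] S := by
  refine isClosed_pcfb_iff.2 fun x hx => ?_
  have hsup : sSup (S ∩ Iic x) = x :=
    le_antisymm (sSup_le fun _ h => h.2) (closure_minimal (fun _ hy => le_sSup hy) isClosed_Iic hx)
  have hD : IsIrreducible (Subtype.val ⁻¹' Iic x : Set S) := by
    rw [← IsInducing.subtypeVal.isIrreducible_image_iff, Subtype.image_preimage_coe,
      isIrreducible_iff_sSup_mem_closure, hsup]
    exact hx
  obtain ⟨g, hg⟩ := QuasiSober.sober hD (isClosed_Iic.preimage continuous_subtype_val)
  have hgx := (isGenericPoint_iff_isGreatest (isClosed_Iic.preimage continuous_subtype_val)).1 hg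
  rw [Subtype.image_preimage_coe] at hgx
  exact (hsup.symm.trans hgx.isLUB.sSup_eq) ▸ g.2

end Supernatural

theorem stmt3 (S : Set Supernatural) :
    (T0Space S ∧ QuasiSober S) ↔ IsClosed[pcfbTopology] S :=
  ⟨fun ⟨_, _⟩ => Supernatural.isClosed_pcfb_of_quasiSober,
    fun h => ⟨inferInstance, Supernatural.quasiSober_of_isClosed_pcfb h⟩⟩
end

section
/- The assignment S ↦ K_S is injective on pcfb-closed subsets: if S and S' are subsets of 𝕊, both closed in the pcfb-topology, and the Grothendieck topologies K_S and K_{S'} on the big cell 𝙳 coincide, then S = S'. -/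
open Topology

open CategoryTheory

/-- The big cell: the category whose objects are the positive natural numbers, with a
unique morphism `m ⟶ n` whenever `n ∣ m` (the opposite of the divisibility poset). -/
def BigCell : Type := ℕ+

/-- The underlying positive natural number of an object of the big cell. -/
def BigCell.d : BigCell → ℕ+ := fun x => x

/-- The object of the big cell corresponding to a positive natural number. -/
def BigCell.of : ℕ+ → BigCell := fun x => x

/-- `m ≤ n` in the big cell iff `n ∣ m`; the induced category has a unique
morphism `m ⟶ n` whenever `n ∣ m`. -/
instance : Preorder BigCell where
  le m n := n.d ∣ m.d
  le_refl _ := dvd_refl _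
  le_trans _ _ _ hab hbc := dvd_trans hbc hab

/-!
A closed set `S` is recovered from `K_S`: a point `s` lies outside `S` iff some basic
neighbourhood `{x | n ∣ x ∧ x ∣ t}` of `s` misses `S`, iff the sieve on `n` of all `m` with
`m ∤ t` covers for `K_S`. Covering is clear if the neighbourhood misses `S`: any `u ∈ S` with
`n ∣ u` has `u ∤ t`, so some `p`-exponent of `u` exceeds the finite `t p`, and `m = lcm n p^(t p + 1)`
witnesses the covering. Conversely this sieve cannot cover for a point `s ∈ S` with `n ∣ s ∣ t`,
since every `m ∣ s` divides `t`.
-/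

namespace Supernatural

theorem dvd_trans {s t u : Supernatural} (hst : s ∣ t) (htu : t ∣ u) : s ∣ u :=
  fun p => (hst p).trans (htu p)

theorem natToSuper_dvd_natToSuper {a b : ℕ+} (h : a ∣ b) : natToSuper a ∣ natToSuper b := by
  intro p
  have := (Nat.factorization_le_iff_dvd a.ne_zero b.ne_zero).2 (PNat.dvd_iff.1 h)
  exact Nat.cast_le.2 (this p)

theorem natToSuper_lcm_apply (a b : ℕ+) (p : Nat.Primes) :
    natToSuper (PNat.lcm a b) p = max (natToSuper a p) (natToSuper b p) := by
  simp only [natToSuper, PNat.lcm_coe, Nat.factorization_lcm a.ne_zero b.ne_zero,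
    Finsupp.sup_apply]
  exact Nat.mono_cast.map_max

theorem natToSuper_lcm_dvd_iff_s8 {a b : ℕ+} {x : Supernatural} :
    natToSuper (PNat.lcm a b) ∣ x ↔ natToSuper a ∣ x ∧ natToSuper b ∣ x := by
  simp only [Dvd.dvd, natToSuper_lcm_apply, max_le_iff]
  exact forall_and

def primePow (p : Nat.Primes) (k : ℕ) : ℕ+ := ⟨(p : ℕ) ^ k, pow_pos p.2.pos k⟩

theorem natToSuper_primePow_dvd_iff {p : Nat.Primes} {k : ℕ} {x : Supernatural} :
    natToSuper (primePow p k) ∣ x ↔ (k : ℕ∞) ≤ x p := by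
  simp only [Dvd.dvd, natToSuper, primePow, PNat.mk_coe, p.2.factorization_pow]
  refine ⟨fun h => by simpa using h p, fun h q => ?_⟩
  rcases eq_or_ne q p with rfl | hqp
  · simpa using h
  · simp [Subtype.coe_injective.ne hqp.symm]

theorem exists_natToSuper_dvd_not_dvd {n : ℕ+} {u t : Supernatural} (hnu : natToSuper n ∣ u)
    (hut : ¬ u ∣ t) : ∃ m : ℕ+, n ∣ m ∧ natToSuper m ∣ u ∧ ¬ natToSuper m ∣ t := by
  obtain ⟨p, hp⟩ : ∃ p, t p < u p := by
    simpa only [Dvd.dvd, not_forall, not_le] using hut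
  obtain ⟨a, ha⟩ := ENat.ne_top_iff_exists.1 hp.ne_top
  rw [← ha] at hp
  refine ⟨PNat.lcm n (primePow p (a + 1)), PNat.dvd_lcm_left _ _,
    natToSuper_lcm_dvd_iff_s8.2 ⟨hnu, natToSuper_primePow_dvd_iff.2 ?_⟩, fun hmt => ?_⟩
  · exact_mod_cast Order.add_one_le_of_lt hp
  · have hpt := natToSuper_primePow_dvd_iff.1 (natToSuper_lcm_dvd_iff_s8.1 hmt).2
    rw [← ha, Nat.cast_le] at hpt
    exact Nat.not_succ_le_self a hpt

end Supernatural

open TopologicalSpace Supernatural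

def pcfbBasicOpen (n : ℕ+) (t : Supernatural) : Set Supernatural :=
  {x | natToSuper n ∣ x ∧ x ∣ t}

def notDvdSieve (n : BigCell) (t : Supernatural) : Sieve n where
  arrows m _ := ¬ natToSuper m.d ∣ t
  downward_closed hm g hg := hm (Supernatural.dvd_trans (natToSuper_dvd_natToSuper g.le) hg)

/-- The covering sieves of the Grothendieck topology `K_S`. -/
def coveringSieves (S : Set Supernatural) (n : BigCell) : Set (Sieve n) :=
  {L | ∀ s ∈ S, natToSuper n.d ∣ s → ∃ (m : BigCell) (f : m ⟶ n), L.arrows f ∧ natToSuper m.d ∣ s}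

theorem notDvdSieve_mem_coveringSieves {S : Set Supernatural} {n : BigCell} {t : Supernatural}
    (h : Disjoint (pcfbBasicOpen n.d t) S) : notDvdSieve n t ∈ coveringSieves S n := by
  intro u hu hnu
  obtain ⟨m, hnm, hmu, hmt⟩ :=
    exists_natToSuper_dvd_not_dvd hnu fun hut => h.ne_of_mem ⟨hnu, hut⟩ hu rfl
  exact ⟨BigCell.of m, homOfLE hnm, hmt, hmu⟩

theorem notDvdSieve_notMem_coveringSieves {S : Set Supernatural} {n : BigCell}
    {s t : Supernatural} (hs : s ∈ S) (hns : natToSuper n.d ∣ s) (hst : s ∣ t) :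
    notDvdSieve n t ∉ coveringSieves S n := fun hcov => by
  obtain ⟨m, _, hmt, hms⟩ := hcov s hs hns
  exact hmt (Supernatural.dvd_trans hms hst)

section

attribute [local instance] pcfbTopology

theorem isTopologicalBasis_pcfbBasicOpen :
    IsTopologicalBasis {U | ∃ n t, U = pcfbBasicOpen n t} where
  exists_subset_inter := by
    rintro _ ⟨n₁, t₁, rfl⟩ _ ⟨n₂, t₂, rfl⟩ x hx
    refine ⟨pcfbBasicOpen (PNat.lcm n₁ n₂) (fun p => min (t₁ p) (t₂ p)), ⟨_, _, rfl⟩, ?_, ?_⟩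
    · exact ⟨natToSuper_lcm_dvd_iff_s8.2 ⟨hx.1.1, hx.2.1⟩, fun p => le_min (hx.1.2 p) (hx.2.2 p)⟩
    · rintro y ⟨hny, hyt⟩
      obtain ⟨hn₁, hn₂⟩ := natToSuper_lcm_dvd_iff_s8.1 hny
      exact ⟨⟨hn₁, fun p => (hyt p).trans (min_le_left _ _)⟩,
        ⟨hn₂, fun p => (hyt p).trans (min_le_right _ _)⟩⟩
  sUnion_eq := Set.eq_univ_of_forall fun _ =>
    ⟨pcfbBasicOpen 1 fun _ => ⊤, ⟨_, _, rfl⟩, fun p => by simp [natToSuper], fun _ => le_top⟩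
  eq_generateFrom := rfl

theorem mem_iff_forall_notDvdSieve_notMem_coveringSieves {S : Set Supernatural}
    (hS : IsClosed S) {s : Supernatural} :
    s ∈ S ↔ ∀ (n : BigCell) t, natToSuper n.d ∣ s → s ∣ t →
      notDvdSieve n t ∉ coveringSieves S n := by
  refine ⟨fun hs n t hns hst => notDvdSieve_notMem_coveringSieves hs hns hst, fun h => ?_⟩
  by_contra hs
  obtain ⟨_, ⟨n, t, rfl⟩, ⟨hns, hst⟩, hsub⟩ :=
    isTopologicalBasis_pcfbBasicOpen.isOpen_iff.1 hS.isOpen_compl s hs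
  exact h (BigCell.of n) t hns hst
    (notDvdSieve_mem_coveringSieves (Set.subset_compl_iff_disjoint_right.1 hsub))

theorem eq_of_coveringSieves_eq {S S' : Set Supernatural} (hS : IsClosed S)
    (hS' : IsClosed S') (h : coveringSieves S = coveringSieves S') : S = S' := by
  ext s
  rw [mem_iff_forall_notDvdSieve_notMem_coveringSieves hS,
    mem_iff_forall_notDvdSieve_notMem_coveringSieves hS', h]

end

theorem stmt8 (S S' : Set Supernatural)
    (hS : IsClosed[pcfbTopology] S) (hS' : IsClosed[pcfbTopology] S')
    (J J' : GrothendieckTopology BigCell)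
    (hJ : ∀ (n : BigCell) (L : Sieve n),
      L ∈ J.sieves n ↔ ∀ s ∈ S, natToSuper n.d ∣ s →
        ∃ (m : BigCell) (f : m ⟶ n), L.arrows f ∧ natToSuper m.d ∣ s)
    (hJ' : ∀ (n : BigCell) (L : Sieve n),
      L ∈ J'.sieves n ↔ ∀ s ∈ S', natToSuper n.d ∣ s →
        ∃ (m : BigCell) (f : m ⟶ n), L.arrows f ∧ natToSuper m.d ∣ s)
    (h : J = J') : S = S' := by
  subst h
  refine eq_of_coveringSieves_eq hS hS' (funext fun n => Set.ext fun L => ?_)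
  exact (hJ n L).symm.trans (hJ' n L)
end
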